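/- For any ε > 0, there exists a graph G that is interval colorable and satisfies W(G) ≥ (2 − ε)·|V(G)|, where W(G) is the greatest t for which G has an interval t-coloring. -/

import Mathlib

/-- An edge-coloring `c` of a graph `G` with colors `1, 2, ..., t` is an *interval
`t`-coloring* if every edge gets a color in `{1, ..., t}`, every color in `{1, ..., t}`
is used on some edge, the colors of edges incident to any vertex are distinct, and the
set of colors of edges incident to any vertex forms an interval of integers. -/
def IsIntervalColoring {V : Type*} (G : SimpleGraph V) (t : ℕ) (c : Sym2 V → ℕ) : Prop :=
  (∀ e ∈ G.edgeSet, c e ∈ Finset.Icc 1 t) ∧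
  (∀ i ∈ Finset.Icc 1 t, ∃ e ∈ G.edgeSet, c e = i) ∧
  (∀ v : V, ∀ e₁ ∈ G.edgeSet, ∀ e₂ ∈ G.edgeSet,
      v ∈ e₁ → v ∈ e₂ → c e₁ = c e₂ → e₁ = e₂) ∧
  (∀ v : V, ∃ a b : ℕ, {i : ℕ | ∃ e ∈ G.edgeSet, v ∈ e ∧ c e = i} = Set.Icc a b)

/-- `G` admits an interval `t`-coloring. -/
def HasIntervalColoring {V : Type*} (G : SimpleGraph V) (t : ℕ) : Prop :=
  ∃ c : Sym2 V → ℕ, IsIntervalColoring G t c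

/-- `G` is bipartite: the vertices can be split into a set `s` and its complement so
that every edge joins a vertex of `s` to a vertex outside `s`. -/
def IsBipartiteGraph {V : Type*} (G : SimpleGraph V) : Prop :=
  ∃ s : Set V, ∀ ⦃v w : V⦄, G.Adj v w → (v ∈ s ↔ w ∉ s)

/-!
Interval colourings of `K_{2^k}` with `2^{k+1} - k - 2` colours are built by doubling:
`K_{2n}` is two copies of `K_n` joined by a `K_{n,n}`. A colouring of `K_n` is encoded by a
symmetric `n × n` array whose row `x` takes every value of `[a x, a x + n - 1]` exactly once,
the largest one on the diagonal; dropping the diagonal, vertex `x` sees exactly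
`[a x, a x + n - 2]`. The doubled array has this shape again, provided the `K_{n,n}` block
has it too with starts shifted by `n - 1`, and such connector arrays double in the same way.
The palettes of two adjacent vertices overlap, so every colour between the first and the last
is used. As `(k + 2) / 2^k → 0`, the number of colours is `(2 - o(1)) 2^k`.
-/

namespace SimpleGraph

variable {V : Type*} (G : SimpleGraph V)

theorem exists_adj_eq_of_mem_edgeSet {e : Sym2 V} {v : V} (he : e ∈ G.edgeSet) (hv : v ∈ e) :
    ∃ w, G.Adj v w ∧ e = s(v, w) := by
  obtain ⟨w, rfl⟩ := Sym2.mem_iff_exists.mp hv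
  exact ⟨w, he, rfl⟩

variable {G} {col : V → V → ℕ}

theorem incidentColors_eq_image (hsymm : ∀ u v, col u v = col v u) (v : V) :
    {i | ∃ e ∈ G.edgeSet, v ∈ e ∧ Sym2.lift ⟨col, hsymm⟩ e = i} = col v '' G.neighborSet v := by
  ext i
  constructor
  · rintro ⟨e, he, hv, rfl⟩
    obtain ⟨w, hw, rfl⟩ := G.exists_adj_eq_of_mem_edgeSet he hv
    exact ⟨w, hw, rfl⟩
  · rintro ⟨w, hw, rfl⟩
    exact ⟨s(v, w), hw, Sym2.mem_mk_left v w, rfl⟩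

theorem isIntervalColoring_lift (hsymm : ∀ u v, col u v = col v u) {t : ℕ}
    (hinj : ∀ v, Set.InjOn (col v) (G.neighborSet v))
    (hpal : ∀ v, ∃ a b, col v '' G.neighborSet v = Set.Icc a b)
    (hrange : ∀ v, col v '' G.neighborSet v ⊆ Set.Icc 1 t)
    (hcover : Set.Icc 1 t ⊆ ⋃ v, col v '' G.neighborSet v) :
    IsIntervalColoring G t (Sym2.lift ⟨col, hsymm⟩) := by
  refine ⟨?_, ?_, ?_, fun v => ?_⟩
  · intro e he
    induction e using Sym2.ind with
    | h v w => simpa using hrange v ⟨w, he, rfl⟩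
  · intro i hi
    obtain ⟨v, ⟨w, hw, rfl⟩⟩ := Set.mem_iUnion.mp (hcover (by simpa using hi))
    exact ⟨s(v, w), hw, rfl⟩
  · intro v e₁ he₁ e₂ he₂ hv₁ hv₂ hcol
    obtain ⟨w₁, hw₁, rfl⟩ := G.exists_adj_eq_of_mem_edgeSet he₁ hv₁
    obtain ⟨w₂, hw₂, rfl⟩ := G.exists_adj_eq_of_mem_edgeSet he₂ hv₂
    rw [hinj v hw₁ hw₂ hcol]
  · rw [incidentColors_eq_image hsymm v]
    exact hpal v

end SimpleGraph

structure IsSymmIntervalArray (n : ℕ) (a : ℕ → ℕ) (M : ℕ → ℕ → ℕ) : Prop where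
  symm : ∀ x < n, ∀ y < n, M x y = M y x
  diag : ∀ x < n, M x x = a x + n - 1
  mapsTo : ∀ x < n, Set.MapsTo (M x) (Set.Iio n) (Set.Icc (a x) (a x + n - 1))
  surjOn : ∀ x < n, Set.SurjOn (M x) (Set.Iio n) (Set.Icc (a x) (a x + n - 1))

/-- `P` colours both copies of `K_n` (the second one shifted by `2n - 1`) and `Q` the `K_{n,n}`
between them; adding `n` on the diagonal lifts the unused diagonal entry above the `Q`-values,
so that it stays the row maximum. -/
def doubleArray (n : ℕ) (P Q : ℕ → ℕ → ℕ) (x y : ℕ) : ℕ :=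
  if x < n then
    if y < n then P x y + (if x = y then n else 0) else Q x (y - n)
  else
    if y < n then Q (x - n) y else P (x - n) (y - n) + (2 * n - 1)

def doubleStart (n : ℕ) (a : ℕ → ℕ) (x : ℕ) : ℕ :=
  if x < n then a x else a (x - n) + (n - 1)

theorem isSymmIntervalArray_one (c : ℕ) :
    IsSymmIntervalArray 1 (fun _ => c) (fun _ _ => c) where
  symm _ _ _ _ := rfl
  diag _ _ := rfl
  mapsTo _ _ _ _ := by simp
  surjOn _ _ i hi := ⟨0, Nat.one_pos, by simp_all⟩

namespace IsSymmIntervalArray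

variable {n : ℕ} {a b : ℕ → ℕ} {M P Q : ℕ → ℕ → ℕ}

theorem injOn (h : IsSymmIntervalArray n a M) {x : ℕ} (hx : x < n) :
    Set.InjOn (M x) (Set.Iio n) := by
  refine Set.injOn_of_ncard_image_eq ?_
  rw [(h.surjOn x hx).image_eq_of_mapsTo (h.mapsTo x hx), Set.ncard_Icc_nat, Set.ncard_Iio_nat]
  omega

theorem lt_diag (h : IsSymmIntervalArray n a M) {x y : ℕ} (hx : x < n) (hy : y < n)
    (hyx : y ≠ x) : M x y < a x + n - 1 := by
  have hle := (h.mapsTo x hx hy).2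
  have hne : M x y ≠ M x x := fun hxy => hyx (h.injOn hx hy hx hxy)
  rw [h.diag x hx] at hne
  omega

theorem congr_start (h : IsSymmIntervalArray n a M) (hab : ∀ x < n, a x = b x) :
    IsSymmIntervalArray n b M where
  symm := h.symm
  diag x hx := hab x hx ▸ h.diag x hx
  mapsTo x hx := hab x hx ▸ h.mapsTo x hx
  surjOn x hx := hab x hx ▸ h.surjOn x hx

theorem add_const (h : IsSymmIntervalArray n a M) (c : ℕ) :
    IsSymmIntervalArray n (fun x => a x + c) (fun x y => M x y + c) where
  symm x hx y hy := by rw [h.symm x hx y hy]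
  diag x hx := by have := h.diag x hx; omega
  mapsTo x hx y hy := by have := h.mapsTo x hx hy; simp only [Set.mem_Icc] at this ⊢; omega
  surjOn x hx i hi := by
    obtain ⟨y, hy, hxy⟩ := h.surjOn x hx (show i - c ∈ _ by simp only [Set.mem_Icc] at hi ⊢; omega)
    exact ⟨y, hy, show M x y + c = i by simp only [Set.mem_Icc] at hi; omega⟩

theorem mapsTo_doubleArray (hP : IsSymmIntervalArray n a P)
    (hQ : IsSymmIntervalArray n (fun x => a x + (n - 1)) Q) {x : ℕ} (hx : x < 2 * n) :
    Set.MapsTo (doubleArray n P Q x) (Set.Iio (2 * n))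
      (Set.Icc (doubleStart n a x) (doubleStart n a x + 2 * n - 1)) := by
  intro y (hy : y < 2 * n)
  simp only [Set.mem_Icc, doubleArray, doubleStart]
  by_cases hxn : x < n <;> by_cases hyn : y < n <;> simp only [hxn, hyn, if_true, if_false]
  · by_cases hxy : x = y
    · subst hxy; have := hP.diag x hxn; rw [if_pos rfl]; omega
    · have := hP.lt_diag hxn hyn (Ne.symm hxy)
      have := hP.mapsTo x hxn hyn
      simp only [hxy, if_false, Set.mem_Icc] at this ⊢; omega
  · have := hQ.mapsTo x hxn (show y - n < n by omega)
    simp only [Set.mem_Icc] at this; omega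
  · have := hQ.mapsTo (x - n) (by omega) hyn
    simp only [Set.mem_Icc] at this; omega
  · have := hP.mapsTo (x - n) (by omega) (show y - n < n by omega)
    simp only [Set.mem_Icc] at this; omega

theorem surjOn_doubleArray (hP : IsSymmIntervalArray n a P)
    (hQ : IsSymmIntervalArray n (fun x => a x + (n - 1)) Q) {x : ℕ} (hx : x < 2 * n) :
    Set.SurjOn (doubleArray n P Q x) (Set.Iio (2 * n))
      (Set.Icc (doubleStart n a x) (doubleStart n a x + 2 * n - 1)) := by
  intro i hi
  simp only [Set.mem_Icc, doubleStart] at hi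
  by_cases hxn : x < n
  · simp only [hxn, if_true] at hi
    by_cases hlow : i < a x + n - 1
    · obtain ⟨y, hy, rfl⟩ := hP.surjOn x hxn (show i ∈ _ by simp only [Set.mem_Icc]; omega)
      have hyx : y ≠ x := by intro h; rw [h, hP.diag x hxn] at hlow; omega
      refine ⟨y, show y < 2 * n by simp only [Set.mem_Iio] at hy; omega, ?_⟩
      simp [doubleArray, hxn, show y < n from hy, hyx.symm]
    by_cases htop : i = a x + 2 * n - 1
    · refine ⟨x, show x < 2 * n by omega, ?_⟩
      simp only [doubleArray, hxn, if_true]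
      rw [hP.diag x hxn]; omega
    · obtain ⟨y, hy, hQy⟩ :=
        hQ.surjOn x hxn (show i ∈ _ by simp only [Set.mem_Icc]; omega)
      simp only [Set.mem_Iio] at hy
      refine ⟨y + n, show y + n < 2 * n by omega, ?_⟩
      simpa [doubleArray, hxn] using hQy
  · simp only [hxn, if_false] at hi
    by_cases hlow : i ≤ a (x - n) + 2 * n - 2
    · obtain ⟨y, hy, hQy⟩ :=
        hQ.surjOn (x - n) (by omega) (show i ∈ _ by simp only [Set.mem_Icc]; omega)
      simp only [Set.mem_Iio] at hy
      refine ⟨y, show y < 2 * n by omega, ?_⟩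
      simpa [doubleArray, hxn, hy] using hQy
    · obtain ⟨y, hy, hPy⟩ := hP.surjOn (x - n) (by omega)
        (show i - (2 * n - 1) ∈ _ by simp only [Set.mem_Icc]; omega)
      simp only [Set.mem_Iio] at hy
      refine ⟨y + n, show y + n < 2 * n by omega, ?_⟩
      simp only [doubleArray, hxn, if_false, show ¬ y + n < n by omega, Nat.add_sub_cancel]
      omega

theorem double (hP : IsSymmIntervalArray n a P)
    (hQ : IsSymmIntervalArray n (fun x => a x + (n - 1)) Q) :
    IsSymmIntervalArray (2 * n) (doubleStart n a) (doubleArray n P Q) where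
  symm x hx y hy := by
    unfold doubleArray
    by_cases hxn : x < n <;> by_cases hyn : y < n <;> simp only [hxn, hyn, if_true, if_false]
    · rw [hP.symm x hxn y hyn, if_congr eq_comm rfl rfl]
    · exact hQ.symm x hxn (y - n) (by omega)
    · exact hQ.symm (x - n) (by omega) y hyn
    · rw [hP.symm (x - n) (by omega) (y - n) (by omega)]
  diag x hx := by
    unfold doubleArray doubleStart
    by_cases hxn : x < n
    · simp only [hxn, if_true]; have := hP.diag x hxn; omega
    · simp only [hxn, if_false]; have := hP.diag (x - n) (by omega); omega
  mapsTo _ hx := mapsTo_doubleArray hP hQ hx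
  surjOn _ hx := surjOn_doubleArray hP hQ hx

theorem image_ne_eq_Icc (h : IsSymmIntervalArray n a M) {u : Fin n} (ha : 1 ≤ a u) :
    (fun v : Fin n => M u v) '' {u}ᶜ = Set.Icc (a u) (a u + n - 2) := by
  obtain ⟨u, hu⟩ := u
  change 1 ≤ a u at ha
  ext i
  constructor
  · rintro ⟨⟨v, hv⟩, hvu, rfl⟩
    have hvu : v ≠ u := fun h => hvu (Fin.ext h)
    have := h.lt_diag hu hv hvu
    have := (h.mapsTo u hu hv).1
    simp only [Set.mem_Icc]
    omega
  · intro hi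
    simp only [Set.mem_Icc] at hi
    obtain ⟨v, hv : v < n, rfl⟩ :=
      h.surjOn u hu (show i ∈ Set.Icc _ _ by simp only [Set.mem_Icc]; omega)
    refine ⟨⟨v, hv⟩, fun hvu => ?_, rfl⟩
    rw [show v = u from congrArg Fin.val hvu, h.diag u hu] at hi
    omega

theorem isIntervalColoring_top (h : IsSymmIntervalArray n a M) {t : ℕ} {u₀ u₁ : Fin n}
    (hu : u₀ ≠ u₁) (h₀ : a u₀ = 1) (h₁ : a u₁ + n - 2 = t) (hstart : ∀ u : Fin n, 1 ≤ a u)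
    (hend : ∀ u : Fin n, a u + n - 2 ≤ t) :
    IsIntervalColoring (⊤ : SimpleGraph (Fin n)) t
      (Sym2.lift ⟨fun u v => M u v, fun u v => h.symm u u.isLt v v.isLt⟩) := by
  have hpal (u : Fin n) : (fun v : Fin n => M u v) '' (⊤ : SimpleGraph (Fin n)).neighborSet u =
      Set.Icc (a u) (a u + n - 2) := by
    rw [SimpleGraph.neighborSet_top, h.image_ne_eq_Icc (hstart u)]
  refine SimpleGraph.isIntervalColoring_lift _ (fun u => ?_) (fun u => ⟨_, _, hpal u⟩)
    (fun u => ?_) ?_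
  · rw [SimpleGraph.neighborSet_top]
    exact fun v _ w _ hvw => Fin.ext (h.injOn u.isLt v.isLt w.isLt hvw)
  · rw [hpal u]
    exact Set.Icc_subset_Icc (hstart u) (hend u)
  · have hc₀ : M u₀ u₁ ∈ Set.Icc (a u₀) (a u₀ + n - 2) := by
      rw [← hpal]; exact ⟨u₁, hu, rfl⟩
    have hc₁ : M u₀ u₁ ∈ Set.Icc (a u₁) (a u₁ + n - 2) := by
      rw [← hpal, h.symm u₀ u₀.isLt u₁ u₁.isLt]; exact ⟨u₀, hu.symm, rfl⟩
    rw [← h₀, ← h₁]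
    refine Set.Icc_subset_Icc_union_Icc.trans ((Set.union_subset_union
      (Set.Icc_subset_Icc_right hc₀.2) (Set.Icc_subset_Icc_left hc₁.1)).trans ?_)
    rw [← hpal, ← hpal]
    exact Set.union_subset (Set.subset_iUnion_of_subset u₀ subset_rfl)
      (Set.subset_iUnion_of_subset u₁ subset_rfl)

end IsSymmIntervalArray

def paletteStart : ℕ → ℕ → ℕ
  | 0 => fun _ => 1
  | m + 1 => doubleStart (2 ^ m) (paletteStart m)

def connectorArray : ℕ → ℕ → ℕ → ℕ
  | 0 => fun _ _ => 1
  | m + 1 => doubleArray (2 ^ m) (fun x y => connectorArray m x y + 2 ^ m)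
      (fun x y => connectorArray m x y + (2 * 2 ^ m - 1))

def completeArray : ℕ → ℕ → ℕ → ℕ
  | 0 => fun _ _ => 1
  | m + 1 => doubleArray (2 ^ m) (completeArray m) (connectorArray m)

theorem isSymmIntervalArray_connectorArray (m : ℕ) :
    IsSymmIntervalArray (2 ^ m) (fun x => paletteStart m x + (2 ^ m - 1)) (connectorArray m) := by
  induction m with
  | zero => exact (isSymmIntervalArray_one 1).congr_start fun _ _ => rfl
  | succ m ih =>
    have hn : 1 ≤ 2 ^ m := Nat.one_le_two_pow
    have hP := ih.add_const (2 ^ m)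
    have hQ := (ih.add_const (2 * 2 ^ m - 1)).congr_start fun x _ => by
      show paletteStart m x + (2 ^ m - 1) + (2 * 2 ^ m - 1) =
        paletteStart m x + (2 ^ m - 1) + 2 ^ m + (2 ^ m - 1)
      omega
    rw [pow_succ']
    refine (hP.double hQ).congr_start fun x _ => ?_
    simp only [paletteStart, doubleStart]
    split_ifs <;> omega

theorem isSymmIntervalArray_completeArray (m : ℕ) :
    IsSymmIntervalArray (2 ^ m) (paletteStart m) (completeArray m) := by
  induction m with
  | zero => exact isSymmIntervalArray_one 1
  | succ m ih =>
    rw [pow_succ']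
    exact ih.double (isSymmIntervalArray_connectorArray m)

theorem one_le_paletteStart (m x : ℕ) : 1 ≤ paletteStart m x := by
  induction m generalizing x with
  | zero => rfl
  | succ m ih =>
    unfold paletteStart doubleStart
    split_ifs
    · exact ih x
    · have := ih (x - 2 ^ m); omega

theorem paletteStart_add_le (m : ℕ) {x : ℕ} (hx : x < 2 ^ m) : paletteStart m x + m ≤ 2 ^ m := by
  induction m generalizing x with
  | zero => simp [paletteStart]
  | succ m ih =>
    rw [pow_succ] at hx ⊢
    unfold paletteStart doubleStart
    split_ifs with h
    · have := ih h; have : 1 ≤ 2 ^ m := Nat.one_le_two_pow; omega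
    · have := ih (x := x - 2 ^ m) (by omega); omega

theorem paletteStart_zero (m : ℕ) : paletteStart m 0 = 1 := by
  induction m with
  | zero => rfl
  | succ m ih => simp [paletteStart, doubleStart, ih]

theorem paletteStart_two_pow_sub_one (m : ℕ) : paletteStart m (2 ^ m - 1) + m = 2 ^ m := by
  induction m with
  | zero => rfl
  | succ m ih =>
    have hn : 1 ≤ 2 ^ m := Nat.one_le_two_pow
    rw [paletteStart, doubleStart, if_neg (by rw [pow_succ]; omega), pow_succ,
      show 2 ^ m * 2 - 1 - 2 ^ m = 2 ^ m - 1 by omega]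
    omega

theorem hasIntervalColoring_top_two_pow {k : ℕ} (hk : 1 ≤ k) :
    HasIntervalColoring (⊤ : SimpleGraph (Fin (2 ^ k))) (2 ^ (k + 1) - k - 2) := by
  have hn : 2 ≤ 2 ^ k := Nat.le_self_pow (by omega) 2
  have hlast := paletteStart_two_pow_sub_one k
  rw [pow_succ]
  exact ⟨_, (isSymmIntervalArray_completeArray k).isIntervalColoring_top
    (u₀ := ⟨0, by omega⟩) (u₁ := ⟨2 ^ k - 1, by omega⟩) (by simp [Fin.ext_iff]; omega)
    (paletteStart_zero k) (by simp only; omega) (fun u => one_le_paletteStart k u)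
    (fun u => by have := paletteStart_add_le k u.isLt; omega)⟩

theorem exists_add_two_le_mul_two_pow {ε : ℝ} (hε : 0 < ε) :
    ∃ k : ℕ, 1 ≤ k ∧ (k + 2 : ℝ) ≤ ε * 2 ^ k := by
  obtain ⟨k, hk, hk₁⟩ := (((tendsto_pow_const_div_const_pow_of_one_lt 1 one_lt_two).eventually
    (gt_mem_nhds (div_pos hε three_pos))).and (Filter.eventually_ge_atTop 1)).exists
  refine ⟨k, hk₁, ?_⟩
  rw [pow_one, div_lt_iff₀ (by positivity)] at hk
  have : (1 : ℝ) ≤ k := by exact_mod_cast hk₁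
  linarith

/-- For any `ε > 0` there is an interval colorable graph `G` with
`W(G) ≥ (2 - ε) * |V(G)|`: indeed, `G` admits an interval `t`-coloring for some
`t ≥ 1` with `(t : ℝ) ≥ (2 - ε) * |V(G)|`. -/
theorem exists_graph_large_interval_coloring (ε : ℝ) (hε : 0 < ε) :
    ∃ (V : Type) (_ : Fintype V) (G : SimpleGraph V) (t : ℕ),
      1 ≤ t ∧ HasIntervalColoring G t ∧ (t : ℝ) ≥ (2 - ε) * Fintype.card V := by
  obtain ⟨k, hk, hkε⟩ := exists_add_two_le_mul_two_pow hε
  have hk2 : k + 3 ≤ 2 ^ (k + 1) := by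
    have := Nat.lt_two_pow_self (n := k); rw [pow_succ]; omega
  refine ⟨Fin (2 ^ k), inferInstance, ⊤, 2 ^ (k + 1) - k - 2, by omega,
    hasIntervalColoring_top_two_pow hk, ?_⟩
  rw [Fintype.card_fin, Nat.sub_sub, Nat.cast_sub (by omega)]
  push_cast
  rw [pow_succ]
  linarith
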